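/- Pushing a 0 onto a stack can be computed by one saturated-sigmoid affine step: for every binary stack γ, σ((1/10)·enc(γ) + 1/10) = enc(γ·0), where γ·0 is the stack obtained from γ by pushing the symbol 0 on top. -/
import Mathlib


/-- Digit encoding of a stack symbol: `d 0 = 1`, `d 1 = 3`. -/
def d (b : Bool) : ℚ := if b then 3 else 1

/-- Base-ten encoding of a binary stack (top symbol is the last element):
`enc (γ₁ ⋯ γ_N) = Σ_{i=1}^N d(γᵢ) · 10^{-(N-i+1)}`. -/
def enc (γ : List Bool) : ℚ := γ.foldl (fun acc b => acc / 10 + d b / 10) 0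

/-- The saturated sigmoid. -/
def sat (x : ℚ) : ℚ := if x < 0 then 0 else if x ≤ 1 then x else 1

lemma foldl_bounds (γ : List Bool) (a : ℚ) (h0 : 0 ≤ a) (h1 : a ≤ 1) :
    0 ≤ γ.foldl (fun acc b => acc / 10 + d b / 10) a ∧
    γ.foldl (fun acc b => acc / 10 + d b / 10) a ≤ 1 := by
  induction γ generalizing a with
  | nil => exact ⟨h0, h1⟩
  | cons b t ih =>
    apply ih
    · have : (0:ℚ) ≤ d b := by cases b <;> simp [d]
      positivity
    · have : d b ≤ 3 := by cases b <;> simp [d]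
      linarith

lemma enc_bounds (γ : List Bool) : 0 ≤ enc γ ∧ enc γ ≤ 1 :=
  foldl_bounds γ 0 le_rfl zero_le_one

theorem push_zero (γ : List Bool) :
    sat ((1/10) * enc γ + 1/10) = enc (γ ++ [false]) := by
  obtain ⟨h0, h1⟩ := enc_bounds γ
  have : enc (γ ++ [false]) = enc γ / 10 + 1/10 := by
    simp [enc, List.foldl_append, d]
  rw [this, sat]
  rw [if_neg (by linarith), if_pos (by linarith)]
  ring
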